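/- For every derivation d of B(q) there exists a family (d_α)_{α∈ℤ} of derivations of B(q), where each d_α is either zero or of degree α, such that d_α = 0 for all but finitely many α and d = Σ_{α∈ℤ} d_α. -/

import Mathlib

/-!
Write `P_γ` for the projection onto `B_γ` along the other homogeneous components, and
`d_α` for the map `L_{β,i} ↦ P_{α+β} (d L_{β,i})`. Because `P` commutes with bracketing by
homogeneous elements up to the shift of degree, every `d_α` is again a derivation, and by
construction it has degree `α`; on each basis vector the `d_α` add up to `d`.
Finiteness comes from `L_{0,0}`, which acts on `B_γ` as the scalar `γ q`: applying `P_{α+β}`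
to `d [L_{0,0}, L_{β,i}] = [d L_{0,0}, L_{β,i}] + [L_{0,0}, d L_{β,i}]` gives
`α q · d_α L_{β,i} = [P_α (d L_{0,0}), L_{β,i}]`, so `d_α = 0` unless `α = 0` or `α` is the
degree of one of the finitely many basis vectors occurring in `d L_{0,0}`.
-/

variable {B : Type} [LieRing B] [LieAlgebra ℂ B]

/-- The homogeneous component `B_α = span{L_{α,i} : i ∈ ℤ_{≥0}}` of the grading of the
Block type Lie algebra. -/
def blockGrade (L : Module.Basis (ℤ × ℕ) ℂ B) (α : ℤ) : Submodule ℂ B :=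
  Submodule.span ℂ (Set.range fun i : ℕ => L (α, i))

/-- The subspace `B^{[j]} = span{L_{β,k} : β ∈ ℤ, 0 ≤ k ≤ j}` (which is `0` for
`j < 0`). -/
def blockFilt (L : Module.Basis (ℤ × ℕ) ℂ B) (j : ℤ) : Submodule ℂ B :=
  Submodule.span ℂ {x | ∃ (β : ℤ) (k : ℕ), (k : ℤ) ≤ j ∧ x = L (β, k)}

/-- A linear map `d` has degree `α` if `d ≠ 0` and `d(B_β) ⊆ B_{α+β}` for all `β`. -/
def HasDegree (L : Module.Basis (ℤ × ℕ) ℂ B) (d : B →ₗ[ℂ] B) (α : ℤ) : Prop :=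
  d ≠ 0 ∧ ∀ β : ℤ, (blockGrade L β).map d ≤ blockGrade L (α + β)

open Module

namespace Module.Basis

section Grading

variable {R M ι κ : Type*} [CommSemiring R] [AddCommMonoid M] [Module R M] [DecidableEq ι]
  (b : Basis (ι × κ) R M)

noncomputable def gradeProj (γ : ι) : M →ₗ[R] M :=
  b.constr R fun p => if p.1 = γ then b p else 0

@[simp]
lemma gradeProj_basis (γ : ι) (p : ι × κ) :
    b.gradeProj γ (b p) = if p.1 = γ then b p else 0 :=
  b.constr_basis R _ p

lemma repr_gradeProj (γ : ι) (x : M) (p : ι × κ) :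
    b.repr (b.gradeProj γ x) p = if p.1 = γ then b.repr x p else 0 := by
  let repr_p : M →ₗ[R] R := Finsupp.lapply p ∘ₗ b.repr.toLinearMap
  by_cases h : p.1 = γ
  · rw [if_pos h]
    refine LinearMap.congr_fun (f := repr_p ∘ₗ b.gradeProj γ) (g := repr_p)
      (b.ext fun r => ?_) x
    by_cases hr : r.1 = γ
    · simp [repr_p, hr]
    · simp [repr_p, hr, Finsupp.single_eq_of_ne (a := r) (a' := p) (by rintro rfl; exact hr h)]
  · rw [if_neg h]
    refine LinearMap.congr_fun (f := repr_p ∘ₗ b.gradeProj γ) (g := 0) (b.ext fun r => ?_) x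
    by_cases hr : r.1 = γ
    · simp [repr_p, hr, Finsupp.single_eq_of_ne (a := r) (a' := p) (by rintro rfl; exact h hr)]
    · simp [repr_p, hr]

lemma gradeProj_eq_zero_of_notMem {γ : ι} {x : M}
    (h : γ ∉ (b.repr x).support.image Prod.fst) : b.gradeProj γ x = 0 := by
  refine b.repr.injective (Finsupp.ext fun p => ?_)
  rw [repr_gradeProj, map_zero, Finsupp.zero_apply]
  split_ifs with hp
  · exact Finsupp.notMem_support_iff.1 fun hs => h (Finset.mem_image.2 ⟨p, hs, hp⟩)
  · rfl

lemma sum_gradeProj_eq_self {T : Finset ι} {x : M} (hx : ∀ γ ∉ T, b.gradeProj γ x = 0) :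
    ∑ γ ∈ T, b.gradeProj γ x = x := by
  have hmem : x ∈ Submodule.span R (b '' {p | p.1 ∈ T}) := by
    refine b.mem_span_image.2 fun p hp => ?_
    by_contra hpT
    have := repr_gradeProj b p.1 x p
    rw [hx p.1 hpT, if_pos rfl, map_zero, Finsupp.zero_apply] at this
    exact Finsupp.mem_support_iff.1 hp this.symm
  have hid : Set.EqOn (⇑(∑ γ ∈ T, b.gradeProj γ)) (⇑(LinearMap.id : M →ₗ[R] M))
      (b '' {p | p.1 ∈ T}) := by
    rintro _ ⟨p, hp, rfl⟩
    simp [show p.1 ∈ T from hp]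
  simpa using LinearMap.eqOn_span' hid hmem

variable [AddGroup ι]

noncomputable def gradedComponent (f : M →ₗ[R] M) (α : ι) : M →ₗ[R] M :=
  b.constr R fun p => b.gradeProj (α + p.1) (f (b p))

@[simp]
lemma gradedComponent_basis (f : M →ₗ[R] M) (α : ι) (p : ι × κ) :
    b.gradedComponent f α (b p) = b.gradeProj (α + p.1) (f (b p)) :=
  b.constr_basis R _ p

lemma sum_gradedComponent {f : M →ₗ[R] M} {S : Finset ι}
    (hS : ∀ α ∉ S, b.gradedComponent f α = 0) : ∑ α ∈ S, b.gradedComponent f α = f := by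
  refine b.ext fun p => ?_
  rw [LinearMap.sum_apply]
  simp only [gradedComponent_basis]
  rw [← Finset.sum_image (f := fun γ => b.gradeProj γ (f (b p))) (g := (· + p.1))
    fun _ _ _ _ => add_right_cancel]
  refine b.sum_gradeProj_eq_self fun γ hγ => ?_
  have hγS : γ - p.1 ∉ S := fun h => hγ (Finset.mem_image.2 ⟨γ - p.1, h, sub_add_cancel γ p.1⟩)
  simpa using LinearMap.congr_fun (hS _ hγS) (b p)

end Grading

lemma leibniz_of_basis {R A ι : Type*} [CommRing R] [LieRing A] [LieAlgebra R A]
    (b : Basis ι R A) {D : A →ₗ[R] A}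
    (h : ∀ i j, D ⁅b i, b j⁆ = ⁅D (b i), b j⁆ + ⁅b i, D (b j)⁆) (x y : A) :
    D ⁅x, y⁆ = ⁅D x, y⁆ + ⁅x, D y⁆ := by
  let br : A →ₗ[R] A →ₗ[R] A := LieModule.toEnd R A A
  have key : br.compr₂ D = br ∘ₗ D + br.compl₂ D := LinearMap.ext_basis b b fun i j => by
    simpa [br] using h i j
  simpa [br] using LinearMap.congr_fun₂ key x y

end Module.Basis

lemma gradeProj_mem_blockGrade (L : Basis (ℤ × ℕ) ℂ B) (γ : ℤ) (x : B) :
    L.gradeProj γ x ∈ blockGrade L γ := by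
  have hrange : LinearMap.range (L.gradeProj γ) ≤ blockGrade L γ := by
    rw [Basis.gradeProj, Basis.constr_range, Submodule.span_le]
    rintro _ ⟨⟨β, i⟩, rfl⟩
    by_cases h : β = γ
    · subst h
      simp only [if_true]
      exact Submodule.subset_span (Set.mem_range_self i)
    · simp [h]
  exact hrange (LinearMap.mem_range_self _ x)

lemma map_gradedComponent_blockGrade_le (L : Basis (ℤ × ℕ) ℂ B) (d : B →ₗ[ℂ] B) (α β : ℤ) :
    (blockGrade L β).map (L.gradedComponent d α) ≤ blockGrade L (α + β) := by
  rw [blockGrade, Submodule.map_span, Submodule.span_le]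
  rintro _ ⟨_, ⟨i, rfl⟩, rfl⟩
  rw [SetLike.mem_coe, Basis.gradedComponent_basis]
  exact gradeProj_mem_blockGrade L (α + β) _

def IsBlockBasis (q : ℕ) (L : Basis (ℤ × ℕ) ℂ B) : Prop :=
  ∀ (α β : ℤ) (i j : ℕ),
    ⁅L (α, i), L (β, j)⁆ = (((β * ((i : ℤ) + q) - α * ((j : ℤ) + q)) : ℤ) : ℂ) • L (α + β, i + j)

namespace IsBlockBasis

variable {q : ℕ} {L : Basis (ℤ × ℕ) ℂ B}

lemma gradeProj_lie_left (hL : IsBlockBasis q L) (δ β : ℤ) (i : ℕ) (x : B) :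
    L.gradeProj δ ⁅L (β, i), x⁆ = ⁅L (β, i), L.gradeProj (δ - β) x⁆ := by
  let ad := LieModule.toEnd ℂ B B (L (β, i))
  refine LinearMap.congr_fun (f := L.gradeProj δ ∘ₗ ad) (g := ad ∘ₗ L.gradeProj (δ - β))
    (L.ext fun ⟨γ, j⟩ => ?_) x
  by_cases h : γ = δ - β
  · rw [show δ = β + γ by omega]
    simp [ad, hL β γ]
  · simp [ad, hL β γ, h, show β + γ ≠ δ by omega]

lemma gradeProj_lie_right (hL : IsBlockBasis q L) (δ γ : ℤ) (j : ℕ) (x : B) :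
    L.gradeProj δ ⁅x, L (γ, j)⁆ = ⁅L.gradeProj (δ - γ) x, L (γ, j)⁆ := by
  rw [← lie_skew, map_neg, hL.gradeProj_lie_left, ← lie_skew, neg_neg]

lemma lie_zero_zero_of_mem_blockGrade (hL : IsBlockBasis q L) {γ : ℤ} {y : B}
    (hy : y ∈ blockGrade L γ) : ⁅L (0, 0), y⁆ = ((γ * q : ℤ) : ℂ) • y := by
  induction hy using Submodule.span_induction with
  | mem _ h =>
    obtain ⟨i, rfl⟩ := h
    simp [hL 0 γ]
  | zero => simp
  | add _ _ _ _ h₁ h₂ => rw [lie_add, h₁, h₂, smul_add]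
  | smul c _ _ h => rw [lie_smul, h, smul_comm]

lemma leibniz_gradedComponent (hL : IsBlockBasis q L) {d : B →ₗ[ℂ] B}
    (hd : ∀ x y : B, d ⁅x, y⁆ = ⁅d x, y⁆ + ⁅x, d y⁆) (α : ℤ) (x y : B) :
    L.gradedComponent d α ⁅x, y⁆ =
      ⁅L.gradedComponent d α x, y⁆ + ⁅x, L.gradedComponent d α y⁆ := by
  refine L.leibniz_of_basis (fun ⟨β, i⟩ ⟨γ, j⟩ => ?_) x y
  calc L.gradedComponent d α ⁅L (β, i), L (γ, j)⁆
      = L.gradeProj (α + β + γ) (d ⁅L (β, i), L (γ, j)⁆) := by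
        rw [hL β γ, map_smul, map_smul, map_smul, Basis.gradedComponent_basis, add_assoc]
    _ = L.gradeProj (α + β + γ) ⁅d (L (β, i)), L (γ, j)⁆ +
          L.gradeProj (α + β + γ) ⁅L (β, i), d (L (γ, j))⁆ := by
        rw [hd, map_add]
    _ = ⁅L.gradedComponent d α (L (β, i)), L (γ, j)⁆ +
          ⁅L (β, i), L.gradedComponent d α (L (γ, j))⁆ := by
        rw [hL.gradeProj_lie_right, hL.gradeProj_lie_left, Basis.gradedComponent_basis,
          Basis.gradedComponent_basis, show α + β + γ - γ = α + β by ring,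
          show α + β + γ - β = α + γ by ring]

lemma gradedComponent_eq_zero_of_gradeProj_eq_zero (hL : IsBlockBasis q L) (hq : q ≠ 0)
    {d : B →ₗ[ℂ] B} (hd : ∀ x y : B, d ⁅x, y⁆ = ⁅d x, y⁆ + ⁅x, d y⁆) {α : ℤ} (hα : α ≠ 0)
    (h : L.gradeProj α (d (L (0, 0))) = 0) : L.gradedComponent d α = 0 := by
  refine L.ext fun ⟨β, i⟩ => ?_
  rw [Basis.gradedComponent_basis, LinearMap.zero_apply]
  set v := L.gradeProj (α + β) (d (L (β, i)))
  have hv : ((β * q : ℤ) : ℂ) • v = (((α + β) * q : ℤ) : ℂ) • v :=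
    calc ((β * q : ℤ) : ℂ) • v = L.gradeProj (α + β) (d ⁅L (0, 0), L (β, i)⁆) := by
          simp [hL 0 β, v]
      _ = ⁅L.gradeProj α (d (L (0, 0))), L (β, i)⁆ + ⁅L (0, 0), v⁆ := by
          rw [hd, map_add, hL.gradeProj_lie_right, hL.gradeProj_lie_left, add_sub_cancel_right,
            sub_zero]
      _ = (((α + β) * q : ℤ) : ℂ) • v := by
          rw [h, zero_lie, zero_add,
            hL.lie_zero_zero_of_mem_blockGrade (gradeProj_mem_blockGrade L _ _)]
  have hαv : ((α * q : ℤ) : ℂ) • v = 0 := by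
    rw [show α * q = (α + β) * q - β * q by ring, Int.cast_sub, sub_smul, hv, sub_self]
  have hαq : ((α * q : ℤ) : ℂ) ≠ 0 := by exact_mod_cast mul_ne_zero hα (by exact_mod_cast hq)
  exact (smul_eq_zero.1 hαv).resolve_left hαq

end IsBlockBasis

/-- For every derivation `d` of the Block type Lie algebra `B(q)` there is a family
`(d_α)_{α ∈ ℤ}` of derivations, each either zero or of degree `α`, such that
`d_α = 0` for all but finitely many `α` and `d = Σ_α d_α`. -/
theorem block_derivation_decomposition (q : ℕ) (hq : 0 < q)
    (L : Module.Basis (ℤ × ℕ) ℂ B)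
    (hL : ∀ (α β : ℤ) (i j : ℕ),
      ⁅L (α, i), L (β, j)⁆ =
        (((β * ((i : ℤ) + q) - α * ((j : ℤ) + q)) : ℤ) : ℂ) • L (α + β, i + j))
    (d : B →ₗ[ℂ] B) (hd : ∀ x y : B, d ⁅x, y⁆ = ⁅d x, y⁆ + ⁅x, d y⁆) :
    ∃ D : ℤ → (B →ₗ[ℂ] B),
      (∀ α : ℤ, ∀ x y : B, D α ⁅x, y⁆ = ⁅D α x, y⁆ + ⁅x, D α y⁆) ∧
      (∀ α : ℤ, D α = 0 ∨ HasDegree L (D α) α) ∧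
      ∃ S : Finset ℤ, (∀ α ∉ S, D α = 0) ∧ d = ∑ α ∈ S, D α := by
  have hL : IsBlockBasis q L := hL
  let S : Finset ℤ := insert 0 ((L.repr (d (L (0, 0)))).support.image Prod.fst)
  have hS : ∀ α ∉ S, L.gradedComponent d α = 0 := fun α hα =>
    hL.gradedComponent_eq_zero_of_gradeProj_eq_zero hq.ne' hd
      (fun h => hα (Finset.mem_insert.2 (Or.inl h)))
      (L.gradeProj_eq_zero_of_notMem fun h => hα (Finset.mem_insert_of_mem h))
  exact ⟨L.gradedComponent d, hL.leibniz_gradedComponent hd,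
    fun α => or_iff_not_imp_left.2 fun h => ⟨h, map_gradedComponent_blockGrade_le L d α⟩,
    S, hS, (L.sum_gradedComponent hS).symm⟩
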